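/- Let n ≥ 1. For each agent i let Aᵢ be a finite nonempty set, pᵢ : Aᵢ → [0,1] a probability mass function with support Sᵢ = {aᵢ : pᵢ(aᵢ) > 0}, and Qᵢ : Aᵢ → ℝ. For τ ∈ (0,1) let m_τ(Qᵢ; pᵢ) denote the unique minimizer over m ∈ ℝ of Σ_{aᵢ∈Aᵢ} pᵢ(aᵢ)·L₂^τ(Qᵢ(aᵢ) − m). Let wᵢ^v ≥ 0 be nonnegative weights and V_share ∈ ℝ, and define V_tot^τ = Σ_{i=1}^n wᵢ^v · m_τ(Qᵢ; pᵢ) + V_share. Then lim_{τ→1⁻} V_tot^τ = max_{(a₁,…,aₙ) ∈ S₁ × ⋯ × Sₙ} ( Σ_{i=1}^n wᵢ^v · Qᵢ(aᵢ) + V_share ); i.e., the factored global state-value built from per-agent upper expectiles converges, as τ → 1, to the maximum of the factored global Q-value over joint actions supported by the (product) behavior policy. -/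

import Mathlib

/-- The asymmetric squared loss `L₂^τ(u) = |τ − 𝟙(u<0)|·u²`, i.e. `τu²` for `u ≥ 0` and
`(1−τ)u²` for `u < 0` (for `τ ∈ (0,1)`). -/
noncomputable def expectileLoss (τ u : ℝ) : ℝ := if u < 0 then (1 - τ) * u ^ 2 else τ * u ^ 2

lemma expectileLoss_nonneg {τ : ℝ} (h0 : 0 ≤ τ) (h1 : τ ≤ 1) (u : ℝ) :
    0 ≤ expectileLoss τ u := by
  unfold expectileLoss
  split
  · exact mul_nonneg (by linarith) (sq_nonneg u)
  · exact mul_nonneg h0 (sq_nonneg u)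

lemma support_nonempty {A : Type*} [Fintype A]
    (p : A → ℝ) (hp : ∀ a, 0 ≤ p a) (hsum : ∑ a, p a = 1) :
    (Finset.univ.filter fun a => 0 < p a).Nonempty := by
  by_contra h
  rw [Finset.not_nonempty_iff_eq_empty, Finset.filter_eq_empty_iff] at h
  have : ∀ a ∈ Finset.univ, p a = 0 := fun a ha => le_antisymm
    (not_lt.mp (h ha)) (hp a)
  rw [Finset.sum_congr rfl this] at hsum
  simp at hsum

lemma expectile_tendsto_max {A : Type*} [Fintype A]
    (p : A → ℝ) (hp : ∀ a, 0 ≤ p a) (hsum : ∑ a, p a = 1)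
    (Q : A → ℝ) (m : ℝ → ℝ)
    (hm : ∀ τ ∈ Set.Ioo (0 : ℝ) 1, ∀ m' : ℝ,
      ∑ a, p a * expectileLoss τ (Q a - m τ) ≤ ∑ a, p a * expectileLoss τ (Q a - m'))
    (hS : (Finset.univ.filter fun a => 0 < p a).Nonempty) :
    Filter.Tendsto m (nhdsWithin 1 (Set.Iio 1))
      (nhds ((Finset.univ.filter fun a => 0 < p a).sup' hS Q)) := by
  set S := Finset.univ.filter fun a => 0 < p a with hSdef
  set M := S.sup' hS Q with hMdef
  -- Step A : m τ ≤ M for τ ∈ Ioo 0 1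
  have hub : ∀ τ ∈ Set.Ioo (0:ℝ) 1, m τ ≤ M := by
    intro τ hτ
    by_contra hcon
    push_neg at hcon
    have key : ∑ a, p a * expectileLoss τ (Q a - M) <
        ∑ a, p a * expectileLoss τ (Q a - m τ) := by
      apply Finset.sum_lt_sum
      · intro a _
        by_cases hpa : 0 < p a
        · have haS : a ∈ S := by simp [hSdef, hpa]
          have hQa : Q a ≤ M := Finset.le_sup' Q haS
          have h1 : Q a - m τ < 0 := by linarith
          have hpos : 0 < (Q a - m τ) ^ 2 := by nlinarith
          have h2 : expectileLoss τ (Q a - M) ≤ expectileLoss τ (Q a - m τ) := by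
            unfold expectileLoss
            rw [if_pos h1]
            split
            · apply mul_le_mul_of_nonneg_left _ (by linarith [hτ.2])
              nlinarith
            · have hz : Q a - M = 0 := le_antisymm (by linarith) (not_lt.mp (by assumption))
              rw [hz]
              nlinarith [hτ.1, hτ.2]
          exact mul_le_mul_of_nonneg_left h2 (hp a)
        · have : p a = 0 := le_antisymm (not_lt.mp hpa) (hp a)
          simp [this]
      · obtain ⟨a, haS⟩ := hS
        refine ⟨a, Finset.mem_univ a, ?_⟩
        have hpa : 0 < p a := by simpa [hSdef] using haS
        have hQa : Q a ≤ M := Finset.le_sup' Q haS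
        have h1 : Q a - m τ < 0 := by linarith
        have hpos : 0 < (Q a - m τ) ^ 2 := by nlinarith
        apply mul_lt_mul_of_pos_left _ hpa
        unfold expectileLoss
        rw [if_pos h1]
        split
        · apply mul_lt_mul_of_pos_left _ (by linarith [hτ.2] : (0:ℝ) < 1 - τ)
          nlinarith
        · have hz : Q a - M = 0 := le_antisymm (by linarith) (not_lt.mp (by assumption))
          rw [hz]
          nlinarith [hτ.1, hτ.2]
    exact absurd (hm τ hτ M) (not_le.mpr key)
  -- an element attaining the max
  obtain ⟨astar, hastar, hQstar⟩ := Finset.exists_mem_eq_sup' hS Q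
  have hpstar : 0 < p astar := by simpa [hSdef] using hastar
  set C : ℝ := ∑ a, p a * (Q a - M) ^ 2 with hCdef
  have hC0 : 0 ≤ C := Finset.sum_nonneg fun a _ => mul_nonneg (hp a) (sq_nonneg _)
  -- Step B/C : key quantitative bound
  have hkey : ∀ τ ∈ Set.Ioo (0:ℝ) 1,
      p astar * (τ * (M - m τ) ^ 2) ≤ (1 - τ) * C := by
    intro τ hτ
    have h1 : p astar * expectileLoss τ (Q astar - m τ) ≤
        ∑ a, p a * expectileLoss τ (Q a - m τ) := by
      apply Finset.single_le_sum (f := fun a => p a * expectileLoss τ (Q a - m τ))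
        (fun a _ => mul_nonneg (hp a) (expectileLoss_nonneg hτ.1.le hτ.2.le _))
        (Finset.mem_univ astar)
    have h2 : ∑ a, p a * expectileLoss τ (Q a - M) ≤ (1 - τ) * C := by
      rw [hCdef, Finset.mul_sum]
      apply Finset.sum_le_sum
      intro a _
      unfold expectileLoss
      split
      · exact le_of_eq (by ring)
      · by_cases hpa : 0 < p a
        · have haS : a ∈ S := by simp [hSdef, hpa]
          have hQa : Q a ≤ M := Finset.le_sup' Q haS
          have hz : Q a - M = 0 := le_antisymm (by linarith) (not_lt.mp (by assumption))
          rw [hz]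
          nlinarith [hτ.2]
        · have hz : p a = 0 := le_antisymm (not_lt.mp hpa) (hp a)
          rw [hz]
          simp
    have h3 : expectileLoss τ (Q astar - m τ) = τ * (M - m τ) ^ 2 := by
      have hge : 0 ≤ Q astar - m τ := by
        rw [← hQstar]; linarith [hub τ hτ]
      unfold expectileLoss
      rw [if_neg (not_lt.mpr hge), ← hQstar]
    calc p astar * (τ * (M - m τ) ^ 2)
        = p astar * expectileLoss τ (Q astar - m τ) := by rw [h3]
      _ ≤ ∑ a, p a * expectileLoss τ (Q a - m τ) := h1
      _ ≤ ∑ a, p a * expectileLoss τ (Q a - M) := hm τ hτ M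
      _ ≤ (1 - τ) * C := h2
  -- Step D : convergence
  rw [Metric.tendsto_nhdsWithin_nhds]
  intro ε hε
  refine ⟨min (1/2) (ε ^ 2 * p astar / (2 * (C + 1))), ?_, ?_⟩
  · have h : 0 < ε ^ 2 * p astar / (2 * (C + 1)) := by positivity
    exact lt_min (by norm_num) h
  · intro τ hτmem hτdist
    have hd1 : |τ - 1| < 1/2 := lt_of_lt_of_le (by simpa [Real.dist_eq] using hτdist) (min_le_left _ _)
    have hd2 : |τ - 1| < ε ^ 2 * p astar / (2 * (C + 1)) :=
      lt_of_lt_of_le (by simpa [Real.dist_eq] using hτdist) (min_le_right _ _)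
    have hτlt : τ < 1 := hτmem
    have habs : 1 - τ = |τ - 1| := by rw [abs_sub_comm, abs_of_pos (by linarith)]
    have hτhalf : 1/2 < τ := by
      rw [abs_sub_comm, abs_of_pos (by linarith)] at hd1; linarith
    have hτIoo : τ ∈ Set.Ioo (0:ℝ) 1 := ⟨by linarith, hτlt⟩
    have hb := hkey τ hτIoo
    have h4 : (1 - τ) * C < ε ^ 2 * p astar / (2 * (C + 1)) * (C + 1) := by
      rw [habs]
      calc |τ - 1| * C ≤ |τ - 1| * (C + 1) :=
            mul_le_mul_of_nonneg_left (by linarith) (abs_nonneg _)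
        _ < ε ^ 2 * p astar / (2 * (C + 1)) * (C + 1) :=
            mul_lt_mul_of_pos_right hd2 (by linarith)
    have h5 : ε ^ 2 * p astar / (2 * (C + 1)) * (C + 1) = p astar * (ε ^ 2 / 2) := by
      field_simp
    rw [h5] at h4
    have h6 : p astar * (τ * (M - m τ) ^ 2) < p astar * (ε ^ 2 / 2) := lt_of_le_of_lt hb h4
    have h7 : τ * (M - m τ) ^ 2 < ε ^ 2 / 2 := (mul_lt_mul_iff_right₀ hpstar).mp h6
    have hsq : (M - m τ) ^ 2 < ε ^ 2 := by nlinarith [sq_nonneg (M - m τ)]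
    rw [Real.dist_eq, abs_lt]
    constructor <;> nlinarith [hε]

/-- global part of Theorem 1: with per-agent probability mass functions `pᵢ`
on finite nonempty sets `Aᵢ`, local Q-functions `Qᵢ`, per-agent `τ`-expectiles
`m i τ` (minimizers of `Σ_{aᵢ} pᵢ(aᵢ)·L₂^τ(Qᵢ(aᵢ) − m)`), nonnegative weights `wᵢ^v` and a
shared value `V_share`, the factored global state-value
`V_tot^τ = Σᵢ wᵢ^v·m i τ + V_share` converges, as `τ → 1⁻`, to the maximum of
`Σᵢ wᵢ^v·Qᵢ(aᵢ) + V_share` over joint actions in the product of the supports of the `pᵢ`. -/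
theorem factored_expectile_value_tendsto_max {n : ℕ} (hn : 1 ≤ n)
    (A : Fin n → Type*) [∀ i, Fintype (A i)] [∀ i, Nonempty (A i)]
    (p : ∀ i, A i → ℝ) (hp : ∀ i a, 0 ≤ p i a) (hsum : ∀ i, ∑ a, p i a = 1)
    (Q : ∀ i, A i → ℝ)
    (m : Fin n → ℝ → ℝ)
    (hm : ∀ i, ∀ τ ∈ Set.Ioo (0 : ℝ) 1, ∀ m' : ℝ,
      ∑ a, p i a * expectileLoss τ (Q i a - m i τ) ≤
        ∑ a, p i a * expectileLoss τ (Q i a - m'))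
    (w : Fin n → ℝ) (hw : ∀ i, 0 ≤ w i) (Vshare : ℝ) :
    Filter.Tendsto (fun τ : ℝ => ∑ i, w i * m i τ + Vshare)
      (nhdsWithin 1 (Set.Iio 1))
      (nhds (sSup {x : ℝ | ∃ a : ∀ i, A i,
        (∀ i, 0 < p i (a i)) ∧ x = ∑ i, w i * Q i (a i) + Vshare})) := by
  have hSne : ∀ i, (Finset.univ.filter fun a => 0 < p i a).Nonempty :=
    fun i => support_nonempty (p i) (hp i) (hsum i)
  set M : Fin n → ℝ := fun i => (Finset.univ.filter fun a => 0 < p i a).sup' (hSne i) (Q i)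
    with hMdef
  have hsup : sSup {x : ℝ | ∃ a : ∀ i, A i,
      (∀ i, 0 < p i (a i)) ∧ x = ∑ i, w i * Q i (a i) + Vshare} = ∑ i, w i * M i + Vshare := by
    apply IsGreatest.csSup_eq
    constructor
    · -- membership
      have hex : ∀ i, ∃ a ∈ (Finset.univ.filter fun b => 0 < p i b), Q i a = M i := by
        intro i
        obtain ⟨a, ha, hQ⟩ := Finset.exists_mem_eq_sup' (hSne i) (Q i)
        exact ⟨a, ha, hQ.symm⟩
      choose a ha hQa using hex
      refine ⟨a, fun i => by simpa using ha i, ?_⟩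
      congr 1
      exact Finset.sum_congr rfl fun i _ => by rw [hQa i]
    · -- upper bound
      rintro x ⟨a, hpa, rfl⟩
      have hle : ∀ i, w i * Q i (a i) ≤ w i * M i := by
        intro i
        apply mul_le_mul_of_nonneg_left _ (hw i)
        exact Finset.le_sup' (Q i) (by simp [hpa i])
      linarith [Finset.sum_le_sum (fun i (_ : i ∈ Finset.univ) => hle i)]
  rw [hsup]
  apply Filter.Tendsto.add _ tendsto_const_nhds
  apply tendsto_finset_sum
  intro i _
  exact (expectile_tendsto_max (p i) (hp i) (hsum i) (Q i) (m i) (hm i) (hSne i)).const_mul (w i)
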